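/- arXiv:1905.06254 — 10 statements merged into one kernel-verified Lean document; each statement's English description precedes it below -/
import Mathlib

section
/- Let H, K, M be Hilbert spaces and K : H → K, M : H → M contractions. Then M*M ≤ K*K if and only if there exists an effect Q on K (i.e., 0 ≤ Q ≤ I) such that M*M = K*QK and ker K* ⊆ ker Q; moreover, in this case Q is unique and Q = C*C where C is the unique contraction with M = CK vanishing on ker K*. -/
/-!
Positivity of `K*K - M*M` means `‖M x‖ ≤ ‖K x‖`, so `K x ↦ M x` is a well-defined contraction on
the range of `K`. Extending it to the closure of the range and composing with the orthogonal
projection gives a contraction `C` with `M = C K` that vanishes on `(ran K)ᗮ = ker K*`, and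
`Q = C*C` is then the required effect. Conversely `K*K - M*M = K*(1 - Q)K ≥ 0`.

For uniqueness, let `D` be selfadjoint with `K* D K = 0` and `D = 0` on `ker K*`. Then `D` maps
`ran K` into `ker K*`, where it vanishes, so `D² K = 0`, hence `D K = 0` (as `ker D² = ker D`).
Taking adjoints, `K* D = 0`, so `D² = 0` and `D = 0`.
-/

open ContinuousLinearMap

namespace ContinuousLinearMap

section Factorization

variable {𝕜 H F G : Type*} [RCLike 𝕜] [NormedAddCommGroup H] [NormedSpace 𝕜 H]
  [NormedAddCommGroup F] [InnerProductSpace 𝕜 F] [CompleteSpace F]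
  [NormedAddCommGroup G] [NormedSpace 𝕜 G] [CompleteSpace G]

theorem exists_comp_eq_of_norm_apply_le (K : H →L[𝕜] F) (M : H →L[𝕜] G)
    (h : ∀ x, ‖M x‖ ≤ ‖K x‖) :
    ∃ C : F →L[𝕜] G, ‖C‖ ≤ 1 ∧ M = C ∘L K ∧ ∀ x ∈ K.rangeᗮ, C x = 0 := by
  set S := K.range.topologicalClosure
  have : CompleteSpace S := K.range.isClosed_topologicalClosure.completeSpace_coe
  let e : H →ₗ[𝕜] S :=
    (K : H →ₗ[𝕜] F).codRestrict S fun x => K.range.le_topologicalClosure ⟨x, rfl⟩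
  have he : DenseRange e := by
    refine Subtype.dense_iff.mpr ?_
    rw [← Set.range_comp]
    exact subset_rfl
  have hbound : ∀ x, ‖(M : H →ₗ[𝕜] G) x‖ ≤ 1 * ‖e x‖ := fun x => (h x).trans_eq (one_mul _).symm
  set C₀ : S →L[𝕜] G := (M : H →ₗ[𝕜] G).extendOfNorm e
  refine ⟨C₀ ∘L S.orthogonalProjectionOnto, ?_, ?_, fun x hx => ?_⟩
  · calc ‖C₀ ∘L S.orthogonalProjectionOnto‖
        ≤ ‖C₀‖ * ‖S.orthogonalProjectionOnto‖ := opNorm_comp_le _ _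
      _ ≤ 1 * 1 := mul_le_mul (LinearMap.opNorm_extendOfNorm_le he zero_le_one hbound)
          S.orthogonalProjectionOnto_norm_le (norm_nonneg _) zero_le_one
      _ = 1 := one_mul 1
  · ext x
    change M x = C₀ (S.orthogonalProjectionOnto (e x))
    rw [S.orthogonalProjectionOnto_mem_subspace_eq_self (e x),
      LinearMap.extendOfNorm_eq he ⟨1, hbound⟩]
    rfl
  · rw [← Submodule.orthogonal_closure] at hx
    rw [comp_apply, Submodule.orthogonalProjectionOnto_apply_of_mem_orthogonal hx, map_zero]

end Factorization

variable {𝕜 E F G : Type*} [RCLike 𝕜]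
  [NormedAddCommGroup E] [InnerProductSpace 𝕜 E] [CompleteSpace E]
  [NormedAddCommGroup F] [InnerProductSpace 𝕜 F] [CompleteSpace F]
  [NormedAddCommGroup G] [InnerProductSpace 𝕜 G] [CompleteSpace G]

theorem isPositive_adjoint_comp_self_sub_adjoint_comp_self_iff (K : E →L[𝕜] F)
    (M : E →L[𝕜] G) :
    (adjoint K ∘L K - adjoint M ∘L M).IsPositive ↔ ∀ x, ‖M x‖ ≤ ‖K x‖ := by
  have hre : ∀ x, (adjoint K ∘L K - adjoint M ∘L M).reApplyInnerSelf x
      = ‖K x‖ ^ 2 - ‖M x‖ ^ 2 := by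
    intro x
    simp only [reApplyInnerSelf, sub_apply, inner_sub_left, map_sub,
      apply_norm_sq_eq_inner_adjoint_left]
  rw [isPositive_def', and_iff_right ((isPositive_adjoint_comp_self K).isSelfAdjoint.sub
    (isPositive_adjoint_comp_self M).isSelfAdjoint)]
  simp only [hre, sub_nonneg, sq_le_sq₀ (norm_nonneg _) (norm_nonneg _)]

theorem isPositive_one_sub_adjoint_comp_self {C : E →L[𝕜] F} (hC : ‖C‖ ≤ 1) :
    (1 - adjoint C ∘L C).IsPositive := by
  simpa [adjoint_one, ← mul_def] using
    (isPositive_adjoint_comp_self_sub_adjoint_comp_self_iff (1 : E →L[𝕜] E) C).mpr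
      fun x => (C.le_of_opNorm_le hC x).trans_eq (by simp)

theorem IsSelfAdjoint.eq_zero_of_adjoint_comp_comp_eq_zero {D : F →L[𝕜] F}
    (hD : IsSelfAdjoint D) (K : E →L[𝕜] F) (hKDK : (adjoint K ∘L D) ∘L K = 0)
    (hker : ∀ x, adjoint K x = 0 → D x = 0) : D = 0 := by
  have hsq : ∀ x, adjoint K (D x) = 0 → D x = 0 := by
    intro x hx
    have hDDx : x ∈ (adjoint D ∘L D).ker := by simpa [hD.adjoint_eq] using hker _ hx
    rwa [ker_adjoint_comp_self] at hDDx
  have hDK : D ∘L K = 0 := ext fun y => hsq (K y) (by simpa using congr($hKDK y))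
  have hKD : adjoint K ∘L D = 0 := by
    simpa [adjoint_comp, hD.adjoint_eq] using congr(adjoint $hDK)
  exact ext fun x => hsq x (by simpa using congr($hKD x))

theorem eq_of_adjoint_comp_comp_eq {Q₁ Q₂ : F →L[𝕜] F} (h₁ : IsSelfAdjoint Q₁)
    (h₂ : IsSelfAdjoint Q₂) (K : E →L[𝕜] F)
    (hQ : (adjoint K ∘L Q₁) ∘L K = (adjoint K ∘L Q₂) ∘L K)
    (hker₁ : ∀ x, adjoint K x = 0 → Q₁ x = 0) (hker₂ : ∀ x, adjoint K x = 0 → Q₂ x = 0) :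
    Q₁ = Q₂ :=
  sub_eq_zero.mp <| (h₁.sub h₂).eq_zero_of_adjoint_comp_comp_eq_zero K
    (by simp only [comp_sub, sub_comp, hQ, sub_self])
    fun x hx => by rw [sub_apply, hker₁ x hx, hker₂ x hx, sub_self]

theorem adjoint_comp_self_eq_of_eq_comp {K : E →L[𝕜] F} {M : E →L[𝕜] G} {C : F →L[𝕜] G}
    (hMC : M = C ∘L K) : adjoint M ∘L M = (adjoint K ∘L (adjoint C ∘L C)) ∘L K := by
  simp only [hMC, adjoint_comp, comp_assoc]

end ContinuousLinearMap

theorem stmt_2_general {H K₀ M₀ : Type*}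
    [NormedAddCommGroup H] [InnerProductSpace ℂ H] [CompleteSpace H]
    [NormedAddCommGroup K₀] [InnerProductSpace ℂ K₀] [CompleteSpace K₀]
    [NormedAddCommGroup M₀] [InnerProductSpace ℂ M₀] [CompleteSpace M₀]
    (K : H →L[ℂ] K₀) (M : H →L[ℂ] M₀) :
    (((adjoint K).comp K - (adjoint M).comp M).IsPositive ↔
      ∃! Q : K₀ →L[ℂ] K₀, Q.IsPositive ∧ (1 - Q).IsPositive ∧
        (adjoint M).comp M = ((adjoint K).comp Q).comp K ∧
        ∀ x : K₀, adjoint K x = 0 → Q x = 0) ∧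
    ∀ (Q : K₀ →L[ℂ] K₀) (C : K₀ →L[ℂ] M₀),
      (Q.IsPositive ∧ (1 - Q).IsPositive ∧
        (adjoint M).comp M = ((adjoint K).comp Q).comp K ∧
        (∀ x : K₀, adjoint K x = 0 → Q x = 0)) →
      (‖C‖ ≤ 1 ∧ M = C.comp K ∧ (∀ x : K₀, adjoint K x = 0 → C x = 0)) →
      Q = (adjoint C).comp C := by
  have hunique : ∀ (Q : K₀ →L[ℂ] K₀) (C : K₀ →L[ℂ] M₀),
      (Q.IsPositive ∧ (1 - Q).IsPositive ∧ adjoint M ∘L M = (adjoint K ∘L Q) ∘L K ∧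
        ∀ x, adjoint K x = 0 → Q x = 0) →
      (‖C‖ ≤ 1 ∧ M = C ∘L K ∧ ∀ x, adjoint K x = 0 → C x = 0) → Q = adjoint C ∘L C := by
    rintro Q C ⟨hQ, -, hMQ, hkerQ⟩ ⟨-, hMC, hkerC⟩
    refine eq_of_adjoint_comp_comp_eq hQ.isSelfAdjoint
      (isPositive_adjoint_comp_self C).isSelfAdjoint K ?_ hkerQ
      fun x hx => by rw [comp_apply, hkerC x hx, map_zero]
    rw [← hMQ, adjoint_comp_self_eq_of_eq_comp hMC]
  refine ⟨⟨fun h => ?_, fun ⟨Q, ⟨_, hQ₁, hMQ, _⟩, _⟩ => ?_⟩, hunique⟩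
  · obtain ⟨C, hC₁, hMC, hkerC⟩ := exists_comp_eq_of_norm_apply_le K M
      ((isPositive_adjoint_comp_self_sub_adjoint_comp_self_iff K M).mp h)
    rw [orthogonal_range] at hkerC
    have hC : ‖C‖ ≤ 1 ∧ M = C ∘L K ∧ ∀ x, adjoint K x = 0 → C x = 0 :=
      ⟨hC₁, hMC, fun x hx => hkerC x hx⟩
    refine ⟨adjoint C ∘L C, ⟨isPositive_adjoint_comp_self C,
      isPositive_one_sub_adjoint_comp_self hC₁, adjoint_comp_self_eq_of_eq_comp hMC,
      fun x hx => by rw [comp_apply, hC.2.2 x hx, map_zero]⟩, fun Q hQ => hunique Q C hQ hC⟩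
  · have hdiff : adjoint K ∘L K - adjoint M ∘L M = adjoint K ∘L (1 - Q) ∘L K := by
      rw [hMQ, sub_comp, comp_sub, one_def, id_comp, comp_assoc]
    exact hdiff ▸ hQ₁.adjoint_conj K

/-- `M*M ≤ K*K` iff there is a (unique) effect `Q` on `K₀` with
`M*M = K* Q K` and `ker K* ⊆ ker Q`; moreover `Q = C*C` for the unique contraction `C` with
`M = C K` vanishing on `ker K*`. -/
theorem stmt_2 {H K₀ M₀ : Type*}
    [NormedAddCommGroup H] [InnerProductSpace ℂ H] [CompleteSpace H]
    [NormedAddCommGroup K₀] [InnerProductSpace ℂ K₀] [CompleteSpace K₀]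
    [NormedAddCommGroup M₀] [InnerProductSpace ℂ M₀] [CompleteSpace M₀]
    (K : H →L[ℂ] K₀) (M : H →L[ℂ] M₀) (hK : ‖K‖ ≤ 1) (hM : ‖M‖ ≤ 1) :
    (((adjoint K).comp K - (adjoint M).comp M).IsPositive ↔
      ∃! Q : K₀ →L[ℂ] K₀, Q.IsPositive ∧ (1 - Q).IsPositive ∧
        (adjoint M).comp M = ((adjoint K).comp Q).comp K ∧
        ∀ x : K₀, adjoint K x = 0 → Q x = 0) ∧
    ∀ (Q : K₀ →L[ℂ] K₀) (C : K₀ →L[ℂ] M₀),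
      (Q.IsPositive ∧ (1 - Q).IsPositive ∧
        (adjoint M).comp M = ((adjoint K).comp Q).comp K ∧
        (∀ x : K₀, adjoint K x = 0 → Q x = 0)) →
      (‖C‖ ≤ 1 ∧ M = C.comp K ∧ (∀ x : K₀, adjoint K x = 0 → C x = 0)) →
      Q = (adjoint C).comp C :=
  stmt_2_general K M
end

section
/- Let K : H → K and M : H → M be bounded operators between Hilbert spaces. Then there exists λ ≥ 0 with M*M ≤ λ K*K if and only if ran M* ⊆ ran K*. -/
/-!
Both directions go through the bound `‖M x‖ ≤ c * ‖K x‖`, which is what `M*M ≤ c² K*K` says.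
Given the bound, for each `y` the functional `x ↦ ⟪y, M x⟫` is controlled by `K x`, so by
Hahn–Banach it factors through `K`, and the Riesz representative `z` of the factor satisfies
`K* z = M* y`. Conversely, if `ran M* ⊆ ran K*`, the restriction of `K*` to `(ker K*)ᗮ` is
injective with the same range, so `M* = K* B` for a linear `B` that is bounded by the closed
graph theorem; then `M = B* K` gives the bound with `c = ‖B‖`.
-/

open ContinuousLinearMap

section

variable {𝕜 E F G : Type*} [RCLike 𝕜]

theorem ContinuousLinearMap.exists_comp_eq_of_norm_le_mul_norm [NormedAddCommGroup E]
    [NormedSpace 𝕜 E] [NormedAddCommGroup F] [NormedSpace 𝕜 F] (K : E →L[𝕜] F)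
    (φ : StrongDual 𝕜 E) (C : ℝ) (h : ∀ x, ‖φ x‖ ≤ C * ‖K x‖) :
    ∃ g : StrongDual 𝕜 F, g.comp K = φ := by
  have hker : LinearMap.ker (K : E →ₗ[𝕜] F) ≤ LinearMap.ker (φ : E →ₗ[𝕜] 𝕜) := fun x hx ↦ by
    simpa [show K x = 0 from hx] using h x
  set ψ : LinearMap.range (K : E →ₗ[𝕜] F) →ₗ[𝕜] 𝕜 :=
    (LinearMap.ker (K : E →ₗ[𝕜] F)).liftQ φ hker ∘ₗ
      (K : E →ₗ[𝕜] F).quotKerEquivRange.symm.toLinearMap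
  have hψ (x : E) : ψ ⟨K x, x, rfl⟩ = φ x :=
    congrArg ((LinearMap.ker (K : E →ₗ[𝕜] F)).liftQ (φ : E →ₗ[𝕜] 𝕜) hker)
      ((K : E →ₗ[𝕜] F).quotKerEquivRange_symm_apply_image x ⟨x, rfl⟩)
  have hψ_bound : ∀ y, ‖ψ y‖ ≤ C * ‖y‖ := by
    rintro ⟨_, x, rfl⟩
    simpa [hψ x] using h x
  obtain ⟨g, hg, -⟩ := exists_extension_norm_eq _ (ψ.mkContinuous C hψ_bound)
  exact ⟨g, ext fun x ↦ (hg ⟨K x, x, rfl⟩).trans (hψ x)⟩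

theorem ContinuousLinearMap.continuous_of_injective_comp [NormedAddCommGroup E]
    [NormedSpace 𝕜 E] [CompleteSpace E] [NormedAddCommGroup F] [NormedSpace 𝕜 F]
    [NormedAddCommGroup G] [NormedSpace 𝕜 G] [CompleteSpace G] (T : E →L[𝕜] F)
    (hT : Function.Injective T) (L : G →ₗ[𝕜] E) (hTL : Continuous (T ∘ L)) : Continuous L := by
  refine L.continuous_of_seq_closed_graph fun u x y hu hLu ↦ hT ?_
  exact tendsto_nhds_unique ((T.continuous.tendsto y).comp hLu) ((hTL.tendsto x).comp hu)

theorem ContinuousLinearMap.exists_comp_eq_of_range_subset [NormedAddCommGroup E]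
    [InnerProductSpace 𝕜 E] [CompleteSpace E] [NormedAddCommGroup F] [NormedSpace 𝕜 F]
    [NormedAddCommGroup G] [NormedSpace 𝕜 G] [CompleteSpace G] (A : E →L[𝕜] F)
    (C : G →L[𝕜] F) (h : Set.range C ⊆ Set.range A) : ∃ B : G →L[𝕜] E, A.comp B = C := by
  set N := A.kerᗮ
  set A' : N →L[𝕜] F := A.comp N.subtypeL
  have hA'_inj : Function.Injective A' := by
    refine (injective_iff_map_eq_zero A').2 fun v hv ↦ Subtype.ext ?_
    have : (v : E) ∈ A.ker ⊓ N := ⟨hv, v.2⟩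
    rwa [Submodule.inf_orthogonal_eq_bot, Submodule.mem_bot] at this
  have hA'_range (g : G) : C g ∈ LinearMap.range (A' : N →ₗ[𝕜] F) := by
    obtain ⟨x, hx⟩ := h ⟨g, rfl⟩
    obtain ⟨p, hp, q, hq, rfl⟩ := A.ker.exists_add_mem_mem_orthogonal x
    exact ⟨⟨q, hq⟩, by simpa [A', show A p = 0 from hp] using hx⟩
  let L : G →ₗ[𝕜] N := (LinearEquiv.ofInjective (A' : N →ₗ[𝕜] F) hA'_inj).symm ∘ₗ
    (C : G →ₗ[𝕜] F).codRestrict _ hA'_range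
  have hA'L (g : G) : A' (L g) = C g :=
    congrArg Subtype.val ((LinearEquiv.ofInjective _ hA'_inj).apply_symm_apply _)
  have hL : Continuous L :=
    A'.continuous_of_injective_comp hA'_inj L <| by
      simpa [Function.comp_def, hA'L] using C.continuous
  exact ⟨N.subtypeL.comp ⟨L, hL⟩, ext hA'L⟩

section Hilbert

variable [NormedAddCommGroup E] [InnerProductSpace 𝕜 E] [CompleteSpace E]
  [NormedAddCommGroup F] [InnerProductSpace 𝕜 F] [CompleteSpace F]
  [NormedAddCommGroup G] [InnerProductSpace 𝕜 G] [CompleteSpace G]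

theorem ContinuousLinearMap.range_adjoint_subset_of_norm_le (K : E →L[𝕜] F) (M : E →L[𝕜] G)
    (c : ℝ) (h : ∀ x, ‖M x‖ ≤ c * ‖K x‖) : Set.range (adjoint M) ⊆ Set.range (adjoint K) := by
  rintro _ ⟨y, rfl⟩
  obtain ⟨g, hg⟩ := K.exists_comp_eq_of_norm_le_mul_norm ((innerSL 𝕜 y).comp M) (‖y‖ * c)
    fun x ↦ calc
      ‖inner 𝕜 y (M x)‖ ≤ ‖y‖ * ‖M x‖ := norm_inner_le_norm _ _
      _ ≤ ‖y‖ * (c * ‖K x‖) := by gcongr; exact h x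
      _ = ‖y‖ * c * ‖K x‖ := by ring
  refine ⟨(InnerProductSpace.toDual 𝕜 F).symm g, ext_inner_right 𝕜 fun x ↦ ?_⟩
  rw [adjoint_inner_left, adjoint_inner_left, InnerProductSpace.toDual_symm_apply]
  exact congr($hg x)

theorem ContinuousLinearMap.exists_norm_le_of_range_adjoint_subset (K : E →L[𝕜] F)
    (M : E →L[𝕜] G) (h : Set.range (adjoint M) ⊆ Set.range (adjoint K)) :
    ∃ c : ℝ, ∀ x, ‖M x‖ ≤ c * ‖K x‖ := by
  obtain ⟨B, hB⟩ := (adjoint K).exists_comp_eq_of_range_subset (adjoint M) h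
  have hM : M = (adjoint B).comp K := by
    rw [← adjoint_adjoint M, ← hB, adjoint_comp, adjoint_adjoint]
  exact ⟨‖adjoint B‖, fun x ↦ hM ▸ (adjoint B).le_opNorm (K x)⟩

end Hilbert

theorem ContinuousLinearMap.isPositive_smul_adjoint_comp_self_sub_iff
    [NormedAddCommGroup E] [InnerProductSpace ℂ E] [CompleteSpace E]
    [NormedAddCommGroup F] [InnerProductSpace ℂ F] [CompleteSpace F]
    [NormedAddCommGroup G] [InnerProductSpace ℂ G] [CompleteSpace G]
    (K : E →L[ℂ] F) (M : E →L[ℂ] G) (lam : ℝ) :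
    (lam • (adjoint K).comp K - (adjoint M).comp M).IsPositive ↔
      ∀ x, ‖M x‖ ^ 2 ≤ lam * ‖K x‖ ^ 2 := by
  have hsa : IsSelfAdjoint (lam • (adjoint K).comp K - (adjoint M).comp M) :=
    ((IsSelfAdjoint.all lam).smul (isPositive_adjoint_comp_self K).isSelfAdjoint).sub
      (isPositive_adjoint_comp_self M).isSelfAdjoint
  have hre (x : E) : (lam • (adjoint K).comp K - (adjoint M).comp M).reApplyInnerSelf x =
      lam * ‖K x‖ ^ 2 - ‖M x‖ ^ 2 := by
    rw [reApplyInnerSelf, sub_apply, smul_apply, RCLike.real_smul_eq_coe_smul (K := ℂ),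
      inner_sub_left, inner_smul_left, comp_apply, comp_apply, adjoint_inner_left,
      adjoint_inner_left, inner_self_eq_norm_sq_to_K, inner_self_eq_norm_sq_to_K]
    simp [← Complex.ofReal_pow]
  simp only [isPositive_def', hsa, true_and, hre, sub_nonneg]

end

/-- For bounded operators `K, M`, there is `λ ≥ 0` with `M*M ≤ λ K*K`
iff `ran M* ⊆ ran K*`. -/
theorem stmt_3 {H K₀ M₀ : Type*}
    [NormedAddCommGroup H] [InnerProductSpace ℂ H] [CompleteSpace H]
    [NormedAddCommGroup K₀] [InnerProductSpace ℂ K₀] [CompleteSpace K₀]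
    [NormedAddCommGroup M₀] [InnerProductSpace ℂ M₀] [CompleteSpace M₀]
    (K : H →L[ℂ] K₀) (M : H →L[ℂ] M₀) :
    (∃ lam : ℝ, 0 ≤ lam ∧
        (lam • (adjoint K).comp K - (adjoint M).comp M).IsPositive) ↔
      Set.range (adjoint M) ⊆ Set.range (adjoint K) := by
  simp only [isPositive_smul_adjoint_comp_self_sub_iff]
  constructor
  · rintro ⟨lam, hlam, hle⟩
    refine K.range_adjoint_subset_of_norm_le M (√lam) fun x ↦ ?_
    rw [← Real.sqrt_sq (norm_nonneg (M x)), ← Real.sqrt_sq (norm_nonneg (K x)),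
      ← Real.sqrt_mul hlam]
    exact Real.sqrt_le_sqrt (hle x)
  · intro h
    obtain ⟨c, hc⟩ := K.exists_norm_le_of_range_adjoint_subset M h
    refine ⟨c ^ 2, sq_nonneg c, fun x ↦ ?_⟩
    simpa [mul_pow] using pow_le_pow_left₀ (norm_nonneg _) (hc x) 2
end

section
/- Let E be an effect on a Hilbert space H (0 ≤ E ≤ I) and φ ∈ H a nonzero vector. There exists λ > 0 such that λ|φ⟩⟨φ| ≤ E if and only if φ lies in the range of E^{1/2}. -/
/-!
Write `E = S * S` with `S = E^{1/2}` self-adjoint. Then `λ |φ⟩⟨φ| ≤ E` says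
`λ |⟪φ, x⟫|² ≤ ‖S x‖²` for all `x`, i.e. the functional `⟪φ, ·⟫` is dominated by `‖S ·‖`
(this is a case of Douglas' range inclusion lemma). Such a functional factors through `S` as a
bounded functional on `ran S`; extending it by Hahn–Banach and representing it by Riesz as
`⟪ψ, ·⟫` gives `φ = S ψ`. Conversely, for `φ = S ψ` Cauchy–Schwarz gives
`|⟪φ, x⟫| = |⟪ψ, S x⟫| ≤ ‖ψ‖ ‖S x‖`.
-/

open ContinuousLinearMap InnerProductSpace
open scoped InnerProduct

theorem exists_pos_mul_sq_le_iff_exists_le_mul {ι : Type*} {a b : ι → ℝ}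
    (ha : ∀ i, 0 ≤ a i) (hb : ∀ i, 0 ≤ b i) :
    (∃ lam : ℝ, 0 < lam ∧ ∀ i, lam * a i ^ 2 ≤ b i ^ 2) ↔ ∃ C : ℝ, ∀ i, a i ≤ C * b i := by
  constructor
  · rintro ⟨lam, hlam, h⟩
    refine ⟨(√lam)⁻¹, fun i => ?_⟩
    have hsqrt : 0 < √lam := Real.sqrt_pos.mpr hlam
    rw [inv_mul_eq_div, le_div_iff₀ hsqrt, mul_comm,
      ← pow_le_pow_iff_left₀ (mul_nonneg hsqrt.le (ha i)) (hb i) two_ne_zero, mul_pow,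
      Real.sq_sqrt hlam.le]
    exact h i
  · rintro ⟨C, h⟩
    refine ⟨(1 + C ^ 2)⁻¹, by positivity, fun i => ?_⟩
    have hsq : a i ^ 2 ≤ C ^ 2 * b i ^ 2 := by
      rw [← mul_pow]; exact pow_le_pow_left₀ (ha i) (h i) 2
    rw [inv_mul_le_iff₀ (by positivity)]
    nlinarith [sq_nonneg (b i)]

section

variable {𝕜 E F : Type*} [RCLike 𝕜]

theorem StrongDual.exists_comp_eq_of_norm_le [NormedAddCommGroup E] [NormedSpace 𝕜 E]
    [NormedAddCommGroup F] [NormedSpace 𝕜 F] {A : E →L[𝕜] F} {f : StrongDual 𝕜 E} {C : ℝ}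
    (h : ∀ x, ‖f x‖ ≤ C * ‖A x‖) : ∃ g : StrongDual 𝕜 F, g ∘L A = f := by
  let Al : E →ₗ[𝕜] F := A
  have hker : LinearMap.ker Al ≤ LinearMap.ker (f : E →ₗ[𝕜] 𝕜) := fun x hx => by
    simpa [Al, show A x = 0 from hx] using h x
  let f₀ : LinearMap.range Al →ₗ[𝕜] 𝕜 :=
    (LinearMap.ker Al).liftQ f hker ∘ₗ Al.quotKerEquivRange.symm.toLinearMap
  have hf₀ : ∀ x, f₀ ⟨Al x, LinearMap.mem_range_self Al x⟩ = f x := fun x => by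
    simp only [f₀, LinearMap.comp_apply, LinearEquiv.coe_coe,
      Al.quotKerEquivRange_symm_apply_image]
    rfl
  have hbound : ∀ y, ‖f₀ y‖ ≤ C * ‖y‖ := by
    rintro ⟨_, x, rfl⟩
    rw [hf₀]
    exact h x
  obtain ⟨g, hg, -⟩ := exists_extension_norm_eq _ (f₀.mkContinuous C hbound)
  exact ⟨g, ContinuousLinearMap.ext fun x => (hg ⟨A x, _⟩).trans (hf₀ x)⟩

variable [NormedAddCommGroup E] [InnerProductSpace 𝕜 E] [CompleteSpace E]
  [NormedAddCommGroup F] [InnerProductSpace 𝕜 F] [CompleteSpace F]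

theorem ContinuousLinearMap.mem_range_adjoint_iff {A : E →L[𝕜] F} {φ : E} :
    φ ∈ Set.range (A†) ↔ ∃ C : ℝ, ∀ x, ‖⟪φ, x⟫_𝕜‖ ≤ C * ‖A x‖ := by
  constructor
  · rintro ⟨ψ, rfl⟩
    exact ⟨‖ψ‖, fun x => by rw [adjoint_inner_left]; exact norm_inner_le_norm ψ (A x)⟩
  · rintro ⟨C, h⟩
    obtain ⟨g, hg⟩ := StrongDual.exists_comp_eq_of_norm_le (f := innerSL 𝕜 φ) h
    refine ⟨(toDual 𝕜 F).symm g, ext_inner_right 𝕜 fun x => ?_⟩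
    rw [adjoint_inner_left, toDual_symm_apply, ← comp_apply, hg, innerSL_apply_apply]

theorem ContinuousLinearMap.isPositive_adjoint_comp_self_sub_smul_rankOne_iff
    (A : E →L[𝕜] F) (φ : E) (lam : ℝ) :
    (A† ∘L A - (lam : 𝕜) • rankOne 𝕜 φ φ).IsPositive ↔
      ∀ x, lam * ‖⟪φ, x⟫_𝕜‖ ^ 2 ≤ ‖A x‖ ^ 2 := by
  have hsymm : (A† ∘L A - (lam : 𝕜) • rankOne 𝕜 φ φ).IsSymmetric :=
    (isPositive_adjoint_comp_self A).isSymmetric.sub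
      ((isSymmetric_rankOne_self φ).smul (RCLike.conj_ofReal lam))
  have hre : ∀ x, (A† ∘L A - (lam : 𝕜) • rankOne 𝕜 φ φ).reApplyInnerSelf x =
      ‖A x‖ ^ 2 - lam * ‖⟪φ, x⟫_𝕜‖ ^ 2 := fun x => by
    have hφ : ⟪rankOne 𝕜 φ φ x, x⟫_𝕜 = (‖⟪φ, x⟫_𝕜‖ ^ 2 : ℝ) := by
      rw [inner_left_rankOne_apply, ← inner_conj_symm, RCLike.conj_mul, RCLike.ofReal_pow]
    rw [reApplyInnerSelf_apply, sub_apply, inner_sub_left, map_sub,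
      ← apply_norm_sq_eq_inner_adjoint_left, smul_apply, inner_smul_left, RCLike.conj_ofReal, hφ,
      ← RCLike.ofReal_mul, RCLike.ofReal_re]
  simp only [isPositive_def, hsymm, true_and, hre, sub_nonneg]

theorem ContinuousLinearMap.exists_isPositive_adjoint_comp_self_sub_smul_rankOne_iff
    (A : E →L[𝕜] F) (φ : E) :
    (∃ lam : ℝ, 0 < lam ∧ (A† ∘L A - (lam : 𝕜) • rankOne 𝕜 φ φ).IsPositive) ↔
      φ ∈ Set.range (A†) := by
  simp only [isPositive_adjoint_comp_self_sub_smul_rankOne_iff, mem_range_adjoint_iff]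
  exact exists_pos_mul_sq_le_iff_exists_le_mul (fun _ => norm_nonneg _) (fun _ => norm_nonneg _)

end

theorem stmt_4_general {H : Type*} [NormedAddCommGroup H] [InnerProductSpace ℂ H] [CompleteSpace H]
    (E : H →L[ℂ] H) (hE : E.IsPositive)
    (φ : H) :
    (∃ lam : ℝ, 0 < lam ∧ (E - lam • (innerSL ℂ φ).smulRight φ).IsPositive) ↔
      φ ∈ Set.range ⇑(CFC.sqrt E) := by
  have hS : (CFC.sqrt E)† = CFC.sqrt E := (CFC.sqrt_nonneg E).isSelfAdjoint.adjoint_eq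
  have hSS : CFC.sqrt E ∘L CFC.sqrt E = E :=
    CFC.sqrt_mul_sqrt_self E ((nonneg_iff_isPositive E).mpr hE)
  simpa only [hS, hSS, ← RCLike.real_smul_eq_coe_smul, rankOne_def] using
    (CFC.sqrt E).exists_isPositive_adjoint_comp_self_sub_smul_rankOne_iff φ

/-- For an effect `E` and a nonzero vector `φ`, there is `λ > 0` with
`λ |φ⟩⟨φ| ≤ E` iff `φ ∈ ran E^{1/2}`. -/
theorem stmt_4 {H : Type*} [NormedAddCommGroup H] [InnerProductSpace ℂ H] [CompleteSpace H]
    (E : H →L[ℂ] H) (hE : E.IsPositive) (hE1 : (1 - E).IsPositive)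
    (φ : H) (hφ : φ ≠ 0) :
    (∃ lam : ℝ, 0 < lam ∧ (E - lam • (innerSL ℂ φ).smulRight φ).IsPositive) ↔
      φ ∈ Set.range ⇑(CFC.sqrt E) :=
  stmt_4_general E hE φ
end

section
/- Let E be an effect on H, φ ∈ ran E^{1/2} nonzero, and let E₀ be the restriction of E to the support subspace H_E = (ker E)^⊥. Then sup{λ ≥ 0 : λ|φ⟩⟨φ| ≤ E} = ‖E₀^{-1/2} φ‖^{-2}. -/
/-!
With `S = √E` we have `E = S† S` and `φ = S† ψ`, so `E - c |φ⟩⟨φ| = S† (1 - c |ψ⟩⟨ψ|) S`.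
By Cauchy–Schwarz, `1 - c |ψ⟩⟨ψ|` is positive as soon as `c ‖ψ‖² ≤ 1`, and then so is its
conjugate. Conversely, positivity of the conjugate makes the quadratic form of `1 - c |ψ⟩⟨ψ|`
nonnegative on `ran S`, hence on its closure `(ker S†)ᗮ = (ker E)ᗮ ∋ ψ`; at `ψ` the form is
`‖ψ‖² - c ‖ψ‖⁴`. So the set in question is the interval `[0, ‖ψ‖⁻²]`.
-/

open ContinuousLinearMap InnerProductSpace
open scoped InnerProduct

lemma sSup_setOf_nonneg_and_mul_le_one {a : ℝ} (ha : 0 < a) :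
    sSup {x : ℝ | 0 ≤ x ∧ x * a ≤ 1} = a⁻¹ := by
  have hIcc : {x : ℝ | 0 ≤ x ∧ x * a ≤ 1} = Set.Icc 0 a⁻¹ := by
    ext x
    rw [Set.mem_ofPred_eq, Set.mem_Icc, ← one_div, le_div_iff₀ ha]
  rw [hIcc, csSup_Icc (inv_nonneg.2 ha.le)]

section

variable {𝕜 H K : Type*} [RCLike 𝕜]
  [NormedAddCommGroup H] [InnerProductSpace 𝕜 H] [NormedAddCommGroup K] [InnerProductSpace 𝕜 K]

lemma inner_smul_rankOne_self_apply_left (c : ℝ) (ψ x : H) :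
    ⟪((c : 𝕜) • rankOne 𝕜 ψ ψ) x, x⟫_𝕜 = ((c * ‖⟪ψ, x⟫_𝕜‖ ^ 2 : ℝ) : 𝕜) := by
  rw [smul_apply, rankOne_apply, smul_smul, inner_smul_left, map_mul, RCLike.conj_ofReal,
    mul_assoc, RCLike.conj_mul]
  push_cast; rfl

lemma reApplyInnerSelf_one_sub_smul_rankOne (c : ℝ) (ψ x : H) :
    (1 - (c : 𝕜) • rankOne 𝕜 ψ ψ).reApplyInnerSelf x = ‖x‖ ^ 2 - c * ‖⟪ψ, x⟫_𝕜‖ ^ 2 := by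
  rw [reApplyInnerSelf, sub_apply, inner_sub_left, map_sub, inner_smul_rankOne_self_apply_left,
    RCLike.ofReal_re, one_apply_eq_self, inner_self_eq_norm_sq]

lemma reApplyInnerSelf_one_sub_smul_rankOne_self_nonneg_iff {c : ℝ} {ψ : H} :
    0 ≤ (1 - (c : 𝕜) • rankOne 𝕜 ψ ψ).reApplyInnerSelf ψ ↔ c * ‖ψ‖ ^ 2 ≤ 1 := by
  rw [reApplyInnerSelf_one_sub_smul_rankOne, inner_self_eq_norm_sq_to_K, norm_pow,
    RCLike.norm_ofReal, abs_norm]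
  rcases eq_or_ne ψ 0 with rfl | hψ
  · simp
  · have : 0 < ‖ψ‖ ^ 2 := by positivity
    constructor <;> intro h <;> nlinarith

lemma isPositive_one_sub_smul_rankOne {c : ℝ} {ψ : H} (h : c * ‖ψ‖ ^ 2 ≤ 1) :
    (1 - (c : 𝕜) • rankOne 𝕜 ψ ψ).IsPositive := by
  refine ⟨LinearMap.IsSymmetric.id.sub ((isSymmetric_rankOne_self ψ).smul (RCLike.conj_ofReal c)),
    fun x => ?_⟩
  have hcs : ‖⟪ψ, x⟫_𝕜‖ ^ 2 ≤ ‖ψ‖ ^ 2 * ‖x‖ ^ 2 := by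
    rw [← mul_pow]; gcongr; exact norm_inner_le_norm ψ x
  rw [reApplyInnerSelf_one_sub_smul_rankOne]
  rcases le_total c 0 with hc | hc
  · nlinarith [sq_nonneg ‖⟪ψ, x⟫_𝕜‖, sq_nonneg ‖x‖]
  · nlinarith [mul_le_mul_of_nonneg_left hcs hc, sq_nonneg ‖x‖]

variable [CompleteSpace H] [CompleteSpace K]

lemma adjoint_comp_one_sub_smul_rankOne_comp (A : H →L[𝕜] K) (c : 𝕜) (ψ : K) :
    A† ∘L (1 - c • rankOne 𝕜 ψ ψ) ∘L A = A† ∘L A - c • rankOne 𝕜 ((A†) ψ) ((A†) ψ) := by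
  rw [sub_comp, comp_sub, smul_comp, comp_smul, rankOne_comp, comp_rankOne, one_def, id_comp]

lemma reApplyInnerSelf_nonneg_of_isPositive_adjoint_conj {A : H →L[𝕜] K} {T : K →L[𝕜] K}
    (hT : (A† ∘L T ∘L A).IsPositive) {y : K} (hy : y ∈ A.range.topologicalClosure) :
    0 ≤ T.reApplyInnerSelf y := by
  refine closure_minimal ?_ (isClosed_le continuous_const T.reApplyInnerSelf_continuous) hy
  rintro _ ⟨x, rfl⟩
  simpa [reApplyInnerSelf, adjoint_inner_left] using hT.re_inner_nonneg_left x

theorem isPositive_adjoint_comp_self_sub_smul_rankOne_iff (A : H →L[𝕜] K) {ψ : K}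
    (hψ : ψ ∈ (A†).kerᗮ) (c : ℝ) :
    (A† ∘L A - (c : 𝕜) • rankOne 𝕜 ((A†) ψ) ((A†) ψ)).IsPositive ↔ c * ‖ψ‖ ^ 2 ≤ 1 := by
  rw [orthogonal_ker, adjoint_adjoint] at hψ
  rw [← adjoint_comp_one_sub_smul_rankOne_comp]
  refine ⟨fun h => ?_, fun h => (isPositive_one_sub_smul_rankOne h).adjoint_conj A⟩
  exact reApplyInnerSelf_one_sub_smul_rankOne_self_nonneg_iff.mp
    (reApplyInnerSelf_nonneg_of_isPositive_adjoint_conj h hψ)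

end

/-- `ψ` encodes `E₀^{-1/2} φ`: the unique vector of `(ker E)ᗮ` with `E^{1/2} ψ = φ`. -/
theorem stmt_5_general {H : Type*} [NormedAddCommGroup H] [InnerProductSpace ℂ H] [CompleteSpace H]
    (E : H →L[ℂ] H) (hE : E.IsPositive)
    (φ ψ : H) (hφ : φ ≠ 0) (hψ : ψ ∈ (LinearMap.ker (E : H →ₗ[ℂ] H))ᗮ) (hψφ : CFC.sqrt E ψ = φ) :
    sSup {lam : ℝ | 0 ≤ lam ∧ (E - lam • (innerSL ℂ φ).smulRight φ).IsPositive} =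
      (‖ψ‖ ^ 2)⁻¹ := by
  set S := CFC.sqrt E
  have hS : S† = S := (CFC.sqrt_nonneg E).isSelfAdjoint.adjoint_eq
  have hES : E = S† ∘L S := by
    rw [hS, ← mul_def, CFC.sqrt_mul_sqrt_self E ((nonneg_iff_isPositive E).2 hE)]
  have hψ' : ψ ∈ (S†).kerᗮ := by
    rwa [hES, ker_adjoint_comp_self, ← hS] at hψ
  have hψ0 : ψ ≠ 0 := by
    rintro rfl
    exact hφ (by rw [← hψφ, map_zero])
  have hset : ∀ lam : ℝ, (E - lam • (innerSL ℂ φ).smulRight φ).IsPositive ↔ lam * ‖ψ‖ ^ 2 ≤ 1 := by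
    intro lam
    rw [← Complex.coe_smul, ← rankOne_def, ← hψφ, ← hS, hES]
    exact isPositive_adjoint_comp_self_sub_smul_rankOne_iff S hψ' lam
  simp_rw [hset]
  exact sSup_setOf_nonneg_and_mul_le_one (by positivity)

/-- For an effect `E` and a nonzero `φ ∈ ran E^{1/2}`, writing
`ψ = E₀^{-1/2} φ` (i.e. `ψ` is the unique vector in the support subspace `(ker E)ᗮ` with
`E^{1/2} ψ = φ`), one has `sup {λ ≥ 0 : λ|φ⟩⟨φ| ≤ E} = ‖ψ‖⁻²`. -/
theorem stmt_5 {H : Type*} [NormedAddCommGroup H] [InnerProductSpace ℂ H] [CompleteSpace H]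
    (E : H →L[ℂ] H) (hE : E.IsPositive) (hE1 : (1 - E).IsPositive)
    (φ ψ : H) (hφ : φ ≠ 0) (hψ : ψ ∈ (LinearMap.ker (E : H →ₗ[ℂ] H))ᗮ) (hψφ : CFC.sqrt E ψ = φ) :
    sSup {lam : ℝ | 0 ≤ lam ∧ (E - lam • (innerSL ℂ φ).smulRight φ).IsPositive} =
      (‖ψ‖ ^ 2)⁻¹ :=
  stmt_5_general E hE φ ψ hφ hψ hψφ
end

section
/- Let E be an effect on H, ψ ∈ H with ‖ψ‖ ≤ 1, and let E = J*PJ be a Naimark dilation of E with J : H → K an isometry and P a projection on K. Then |ψ⟩⟨ψ| ≤ E if and only if there exists η in the closure of ran(PJ) with ‖η‖ ≤ 1 such that ψ = J*η. -/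
/-! On `closure (range T)` the functional `T x ↦ ⟪ψ, x⟫` is well defined and of norm at most `1`
exactly when `‖⟪ψ, x⟫‖ ≤ ‖T x‖` for all `x`, and its Riesz representative `η` then satisfies
`T* η = ψ`. With `T = PJ` this inequality is `|ψ⟩⟨ψ| ≤ (PJ)*(PJ) = J*PJ = E`, and `T* η = J* η`
because `P` fixes `closure (range (PJ))`. -/

open ContinuousLinearMap

open scoped InnerProductSpace

theorem IsIdempotentElem.apply_eq_self_of_mem_closure_range_comp {R M N : Type*} [Semiring R]
    [TopologicalSpace M] [T2Space M] [AddCommMonoid M] [Module R M]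
    [TopologicalSpace N] [AddCommMonoid N] [Module R N]
    {P : M →L[R] M} (hP : IsIdempotentElem P) (J : N →L[R] M) {η : M}
    (hη : η ∈ closure (Set.range (P ∘L J))) : P η = η := by
  have hfix : Set.range (P ∘L J) ⊆ {y | P y = y} := by
    rintro _ ⟨x, rfl⟩
    exact congr($hP (J x))
  exact closure_minimal hfix (isClosed_eq P.continuous continuous_id) hη

namespace ContinuousLinearMap

variable {𝕜 H K : Type*} [RCLike 𝕜]
  [NormedAddCommGroup H] [InnerProductSpace 𝕜 H] [CompleteSpace H]
  [NormedAddCommGroup K] [InnerProductSpace 𝕜 K] [CompleteSpace K]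

theorem exists_mem_closure_range_adjoint_apply_eq_of_norm_inner_le (T : H →L[𝕜] K) {ψ : H}
    (hψ : ∀ x, ‖⟪ψ, x⟫_𝕜‖ ≤ ‖T x‖) :
    ∃ η ∈ closure (Set.range T), ‖η‖ ≤ 1 ∧ adjoint T η = ψ := by
  set R := LinearMap.range (T : H →ₗ[𝕜] K)
  set S := R.topologicalClosure
  have hS : (S : Set K) = closure (Set.range T) := by
    rw [Submodule.topologicalClosure_coe, LinearMap.coe_range, coe_coe]
  let T' : H →L[𝕜] S := T.codRestrict S fun x ↦ R.le_topologicalClosure ⟨x, rfl⟩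
  have hdense : DenseRange T' := by
    rw [DenseRange, Subtype.dense_iff, ← Set.range_comp]
    exact hS.le
  let φ : S →L[𝕜] 𝕜 := (innerₛₗ 𝕜 ψ).extendOfNorm (T' : H →ₗ[𝕜] S)
  have hbound (x : H) : ‖innerₛₗ 𝕜 ψ x‖ ≤ 1 * ‖T' x‖ := (one_mul ‖T x‖).symm ▸ hψ x
  have hφ (x : H) : φ (T' x) = ⟪ψ, x⟫_𝕜 := LinearMap.extendOfNorm_eq hdense ⟨1, hbound⟩ x
  set η := (InnerProductSpace.toDual 𝕜 S).symm φ
  refine ⟨η, hS ▸ η.2, ?_, ext_inner_right 𝕜 fun x ↦ ?_⟩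
  · calc ‖(η : K)‖ = ‖φ‖ := (InnerProductSpace.toDual 𝕜 S).symm.norm_map φ
      _ ≤ 1 := LinearMap.opNorm_extendOfNorm_le hdense zero_le_one hbound
  · rw [adjoint_inner_left, ← hφ]
    exact (Submodule.coe_inner S η (T' x)).symm.trans InnerProductSpace.toDual_symm_apply

theorem forall_norm_inner_le_iff_exists_eq_adjoint_apply (T : H →L[𝕜] K) (ψ : H) :
    (∀ x, ‖⟪ψ, x⟫_𝕜‖ ≤ ‖T x‖) ↔ ∃ η ∈ closure (Set.range T), ‖η‖ ≤ 1 ∧ ψ = adjoint T η := by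
  refine ⟨fun hψ ↦ ?_, ?_⟩
  · exact (exists_mem_closure_range_adjoint_apply_eq_of_norm_inner_le T hψ).imp
      fun η ⟨hη, hη_norm, hψη⟩ ↦ ⟨hη, hη_norm, hψη.symm⟩
  · rintro ⟨η, -, hη_norm, rfl⟩ x
    calc ‖⟪adjoint T η, x⟫_𝕜‖ = ‖⟪η, T x⟫_𝕜‖ := by rw [adjoint_inner_left]
      _ ≤ ‖η‖ * ‖T x‖ := norm_inner_le_norm η (T x)
      _ ≤ ‖T x‖ := mul_le_of_le_one_left (norm_nonneg _) hη_norm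

theorem isPositive_adjoint_comp_self_sub_rankOne_iff (T : H →L[𝕜] K) (ψ : H) :
    (adjoint T ∘L T - InnerProductSpace.rankOne 𝕜 ψ ψ).IsPositive ↔
      ∀ x, ‖⟪ψ, x⟫_𝕜‖ ≤ ‖T x‖ := by
  have hre (x : H) : (adjoint T ∘L T - InnerProductSpace.rankOne 𝕜 ψ ψ).reApplyInnerSelf x =
      ‖T x‖ ^ 2 - ‖⟪ψ, x⟫_𝕜‖ ^ 2 := by
    rw [reApplyInnerSelf, sub_apply, inner_sub_left, map_sub, ← apply_norm_sq_eq_inner_adjoint_left,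
      InnerProductSpace.rankOne_apply, inner_smul_left, RCLike.conj_mul, ← RCLike.ofReal_pow,
      RCLike.ofReal_re]
  have hsymm : (adjoint T ∘L T - InnerProductSpace.rankOne 𝕜 ψ ψ).IsSymmetric :=
    T.isPositive_adjoint_comp_self.isSymmetric.sub
      (InnerProductSpace.isSymmetric_rankOne_self ψ)
  simp only [isPositive_def, hre, sub_nonneg, and_iff_right hsymm]
  exact forall_congr' fun x ↦ sq_le_sq₀ (norm_nonneg _) (norm_nonneg _)

theorem IsStarProjection.adjoint_comp_comp_self {P : K →L[𝕜] K} (hP : IsStarProjection P)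
    (J : H →L[𝕜] K) : adjoint (P ∘L J) ∘L (P ∘L J) = (adjoint J ∘L P) ∘L J := by
  rw [adjoint_comp, hP.isSelfAdjoint.adjoint_eq, comp_assoc, comp_assoc, ← comp_assoc P P J,
    ← mul_def, hP.isIdempotentElem.eq]

end ContinuousLinearMap

theorem stmt_6_general {H K : Type*}
    [NormedAddCommGroup H] [InnerProductSpace ℂ H] [CompleteSpace H]
    [NormedAddCommGroup K] [InnerProductSpace ℂ K] [CompleteSpace K]
    (E : H →L[ℂ] H)
    (J : H →L[ℂ] K)
    (P : K →L[ℂ] K) (hPsa : IsSelfAdjoint P) (hPidem : IsIdempotentElem P)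
    (hdil : E = ((adjoint J).comp P).comp J)
    (ψ : H) :
    (E - (innerSL ℂ ψ).smulRight ψ).IsPositive ↔
      ∃ η ∈ closure (Set.range ⇑(P.comp J)), ‖η‖ ≤ 1 ∧ ψ = adjoint J η := by
  have hadj : ∀ η ∈ closure (Set.range ⇑(P.comp J)), adjoint (P.comp J) η = adjoint J η := by
    intro η hη
    rw [adjoint_comp, comp_apply, hPsa.adjoint_eq,
      hPidem.apply_eq_self_of_mem_closure_range_comp J hη]
  rw [hdil, ← IsStarProjection.adjoint_comp_comp_self ⟨hPidem, hPsa⟩ J,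
    ← InnerProductSpace.rankOne_def, isPositive_adjoint_comp_self_sub_rankOne_iff,
    forall_norm_inner_le_iff_exists_eq_adjoint_apply]
  exact exists_congr fun η ↦ and_congr_right fun hη ↦ by rw [hadj η hη]

/-- Let `E = J*PJ` be a Naimark dilation of the effect `E` (with `J` an
isometry and `P` a projection). For `‖ψ‖ ≤ 1`: `|ψ⟩⟨ψ| ≤ E` iff `ψ = J*η` for some `η` in the
closure of `ran (PJ)` with `‖η‖ ≤ 1`. -/
theorem stmt_6 {H K : Type*}
    [NormedAddCommGroup H] [InnerProductSpace ℂ H] [CompleteSpace H]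
    [NormedAddCommGroup K] [InnerProductSpace ℂ K] [CompleteSpace K]
    (E : H →L[ℂ] H) (hE : E.IsPositive) (hE1 : (1 - E).IsPositive)
    (J : H →L[ℂ] K) (hJ : (adjoint J).comp J = 1)
    (P : K →L[ℂ] K) (hPsa : IsSelfAdjoint P) (hPidem : IsIdempotentElem P)
    (hdil : E = ((adjoint J).comp P).comp J)
    (ψ : H) (hψ : ‖ψ‖ ≤ 1) :
    (E - (innerSL ℂ ψ).smulRight ψ).IsPositive ↔
      ∃ η ∈ closure (Set.range ⇑(P.comp J)), ‖η‖ ≤ 1 ∧ ψ = adjoint J η :=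
  stmt_6_general E J P hPsa hPidem hdil ψ
end

section
/- There exist a projection-valued measure A on ℝ (namely the canonical position spectral measure on L²(ℝ)) and a continuous function f : ℝ → [0,1] with supp f = ℝ (so A(supp f) = I) such that the effect E = ∫ f dA has nontrivial kernel, i.e., P_E ≠ I. -/
open MeasureTheory Metric ENNReal

/-!
A fat Cantor set: since ℚ is countable, outer regularity gives a dense open `U ⊇ ℚ` of measure
`< 1`, so the closed nowhere dense set `C = Uᶜ` still meets `[0, 1]` in positive measure.
The function `f = min 1 (dist · C)` is positive exactly on the dense set `U`, so its support is
all of `ℝ`, yet it vanishes on `C`; the indicator of `[0, 1] ∩ C` is then a nonzero vector of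
`L²(ℝ)` killed by multiplication by `f`.
-/

theorem exists_isOpen_dense_measure_lt {X : Type*} [TopologicalSpace X]
    [TopologicalSpace.SeparableSpace X] [MeasurableSpace X] (μ : Measure X) [μ.OuterRegular]
    [NullSingletonClass μ] {ε : ℝ≥0∞} (hε : 0 < ε) :
    ∃ U : Set X, IsOpen U ∧ Dense U ∧ μ U < ε := by
  obtain ⟨s, hs_countable, hs_dense⟩ := TopologicalSpace.exists_countable_dense X
  obtain ⟨U, hsU, hU_open, hU_lt⟩ :=
    s.exists_isOpen_lt_of_lt ε (by rwa [hs_countable.measure_zero μ])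
  exact ⟨U, hU_open, hs_dense.mono hsU, hU_lt⟩

theorem exists_isClosed_dense_compl_measure_inter_pos {X : Type*} [TopologicalSpace X]
    [TopologicalSpace.SeparableSpace X] [MeasurableSpace X] (μ : Measure X) [μ.OuterRegular]
    [NullSingletonClass μ] {K : Set X} (hK : 0 < μ K) :
    ∃ C : Set X, IsClosed C ∧ Dense Cᶜ ∧ 0 < μ (K ∩ C) := by
  obtain ⟨U, hU_open, hU_dense, hU_lt⟩ := exists_isOpen_dense_measure_lt μ hK
  refine ⟨Uᶜ, hU_open.isClosed_compl, by rwa [compl_compl], ?_⟩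
  calc 0 < μ K - μ U := tsub_pos_of_lt hU_lt
    _ ≤ μ (K \ U) := le_measure_sdiff
    _ = μ (K ∩ Uᶜ) := rfl

theorem support_min_one_infDist {E : Type*} [PseudoMetricSpace E] {C : Set E}
    (hC : IsClosed C) (hC_nonempty : C.Nonempty) :
    Function.support (fun x => min 1 (infDist x C)) = Cᶜ := by
  ext x
  rw [Function.mem_support, Set.mem_compl_iff, hC.notMem_iff_infDist_pos hC_nonempty]
  constructor
  · intro h
    exact infDist_nonneg.lt_of_ne' fun h0 => h (by rw [h0, min_eq_right zero_le_one])
  · intro h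
    exact (lt_min one_pos h).ne'

theorem indicatorConstLp_ne_zero {α E : Type*} [MeasurableSpace α] {μ : Measure α}
    [NormedAddCommGroup E] {p : ℝ≥0∞} {s : Set α} (hs : MeasurableSet s)
    (hμs : μ s ≠ ∞) {c : E} (hc : c ≠ 0) (hμs_ne_zero : μ s ≠ 0) :
    indicatorConstLp p hs hμs c ≠ 0 := by
  intro h
  have hae : s.indicator (fun _ => c) =ᵐ[μ] 0 :=
    indicatorConstLp_coeFn.symm.trans (h ▸ Lp.coeFn_zero E p μ)
  refine hμs_ne_zero (measure_mono_null (fun x hx => ?_) (ae_iff.1 hae))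
  simpa [Set.indicator_of_mem hx] using ⟨hx, hc⟩

/-- There is a continuous function `f : ℝ → [0,1]` with full support
(`supp f = ℝ`, so that `Q(supp f) = I` for the canonical position spectral measure `Q` on
`L²(ℝ)`) such that the effect `E = f(Q)`, i.e. multiplication by `f` on `L²(ℝ)`, has a
nontrivial kernel; hence its support projection `P_E ≠ I`. -/
theorem stmt_9 :
    ∃ f : ℝ → ℝ, Continuous f ∧ (∀ x, f x ∈ Set.Icc (0 : ℝ) 1) ∧
      tsupport f = Set.univ ∧
      ∃ ψ : Lp ℂ 2 (volume : Measure ℝ), ψ ≠ 0 ∧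
        (∀ᵐ x ∂(volume : Measure ℝ), (f x : ℂ) * ψ x = 0) := by
  obtain ⟨C, hC_closed, hC_dense_compl, hS_pos⟩ :=
    exists_isClosed_dense_compl_measure_inter_pos volume (K := Set.Icc (0 : ℝ) 1) (by simp)
  set S := Set.Icc (0 : ℝ) 1 ∩ C
  have hS : MeasurableSet S := measurableSet_Icc.inter hC_closed.measurableSet
  have hS_finite : volume S ≠ ∞ :=
    ((measure_mono Set.inter_subset_left).trans_lt measure_Icc_lt_top).ne
  have hC_nonempty : C.Nonempty :=
    (nonempty_of_measure_ne_zero hS_pos.ne').mono Set.inter_subset_right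
  refine ⟨fun x => min 1 (infDist x C), continuous_const.min (continuous_infDist_pt C),
    fun x => ⟨le_min zero_le_one infDist_nonneg, min_le_left _ _⟩, ?_,
    indicatorConstLp 2 hS hS_finite 1,
    indicatorConstLp_ne_zero hS hS_finite one_ne_zero hS_pos.ne', ?_⟩
  · rw [tsupport, support_min_one_infDist hC_closed hC_nonempty, hC_dense_compl.closure_eq]
  · filter_upwards [indicatorConstLp_coeFn (μ := volume) (p := 2) (hs := hS) (hμs := hS_finite)
      (c := (1 : ℂ))] with x hx
    by_cases hxS : x ∈ S
    · simp [infDist_zero_of_mem hxS.2]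
    · simp [hx, Set.indicator_of_notMem hxS]
end

section
/- Let Λ(ρ) = MρM* and Φ(ρ) = KρK* be pure operations on trace-class operators of H, where M and K are contractions, with associated effects A = M*M and E = K*K. Then A ≤ E if and only if there exists a pure operation Ψ(ρ) = CρC* (C a contraction) such that Λ = Ψ ∘ Φ. -/
/-!
`M*M ≤ K*K` says exactly that `‖M x‖ ≤ ‖K x‖` for all `x`. By Douglas's lemma this is
equivalent to `M = C K` for a contraction `C`, and then `M ρ M* = C (K ρ K*) C*`. Conversely,
testing `M ρ M* = C (K ρ K*) C*` on the rank-one operator `ρ = x ⊗ x` gives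
`(M x) ⊗ (M x) = (C K x) ⊗ (C K x)`, hence `‖M x‖ = ‖C K x‖ ≤ ‖K x‖`.
-/

open ContinuousLinearMap InnerProductSpace

section Douglas

variable {𝕜 E F G : Type*} [RCLike 𝕜] [NormedAddCommGroup E] [NormedSpace 𝕜 E]
  [NormedAddCommGroup F] [NormedSpace 𝕜 F] [CompleteSpace F]
  [NormedAddCommGroup G] [InnerProductSpace 𝕜 G] [CompleteSpace G]

/-- `C` is first defined on the closure `S` of the range of `K` by extending `K x ↦ M x`,
and then on all of `G` through the orthogonal projection onto `S`. -/
theorem exists_comp_eq_of_norm_apply_le (M : E →L[𝕜] F) (K : E →L[𝕜] G) {c : ℝ} (hc : 0 ≤ c)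
    (h : ∀ x, ‖M x‖ ≤ c * ‖K x‖) : ∃ C : G →L[𝕜] F, ‖C‖ ≤ c ∧ C ∘L K = M := by
  set S := (LinearMap.range (K : E →ₗ[𝕜] G)).topologicalClosure
  let e : E →ₗ[𝕜] S := (K : E →ₗ[𝕜] G).codRestrict S
    fun x => Submodule.le_topologicalClosure _ ⟨x, rfl⟩
  have he : DenseRange e := by
    rw [DenseRange, Subtype.dense_iff, ← Set.range_comp]
    exact subset_refl _
  let D : S →L[𝕜] F := (M : E →ₗ[𝕜] F).extendOfNorm e
  have hD : ∀ x, D (e x) = M x := LinearMap.extendOfNorm_eq he ⟨c, h⟩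
  have hD_norm : ‖D‖ ≤ c := opNorm_le_bound _ hc (LinearMap.norm_extendOfNorm_apply_le he c h)
  refine ⟨D ∘L S.orthogonalProjectionOnto, ?_, ?_⟩
  · calc ‖D ∘L S.orthogonalProjectionOnto‖ ≤ ‖D‖ * ‖S.orthogonalProjectionOnto‖ :=
          opNorm_comp_le _ _
      _ ≤ c * 1 := by gcongr; exact S.orthogonalProjectionOnto_norm_le
      _ = c := mul_one c
  · ext x
    have h_proj : S.orthogonalProjectionOnto (K x) = e x :=
      S.orthogonalProjectionOnto_mem_subspace_eq_self (e x)
    rw [comp_apply, comp_apply, h_proj, hD]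

end Douglas

section Hilbert

variable {𝕜 E F G : Type*} [RCLike 𝕜]
  [NormedAddCommGroup E] [InnerProductSpace 𝕜 E] [CompleteSpace E]
  [NormedAddCommGroup F] [InnerProductSpace 𝕜 F]
  [NormedAddCommGroup G] [InnerProductSpace 𝕜 G] [CompleteSpace G]

theorem comp_rankOne_comp_adjoint (A : E →L[𝕜] F) (B : E →L[𝕜] G) (x y : E) :
    (A ∘L rankOne 𝕜 x y) ∘L adjoint B = rankOne 𝕜 (A x) (B y) := by
  rw [comp_rankOne, rankOne_comp, adjoint_adjoint]

variable [CompleteSpace F]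

theorem adjoint_comp_self_le_adjoint_comp_self_iff (M K : E →L[𝕜] F) :
    adjoint M ∘L M ≤ adjoint K ∘L K ↔ ∀ x, ‖M x‖ ≤ ‖K x‖ := by
  have h_sa : IsSelfAdjoint (adjoint K ∘L K - adjoint M ∘L M) :=
    (isPositive_adjoint_comp_self K).isSelfAdjoint.sub
      (isPositive_adjoint_comp_self M).isSelfAdjoint
  have h_re : ∀ x,
      (adjoint K ∘L K - adjoint M ∘L M).reApplyInnerSelf x = ‖K x‖ ^ 2 - ‖M x‖ ^ 2 := by
    intro x
    rw [reApplyInnerSelf, sub_apply, inner_sub_left, map_sub,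
      apply_norm_sq_eq_inner_adjoint_left, apply_norm_sq_eq_inner_adjoint_left]
  simp only [le_def, isPositive_def', h_sa, true_and, h_re, sub_nonneg,
    sq_le_sq₀ (norm_nonneg _) (norm_nonneg _)]

theorem norm_apply_eq_of_forall_conj_eq {M : E →L[𝕜] F} {K : E →L[𝕜] G} {C : G →L[𝕜] F}
    (h : ∀ ρ : E →L[𝕜] E, (M ∘L ρ) ∘L adjoint M = C ∘L ((K ∘L ρ) ∘L adjoint K) ∘L adjoint C)
    (x : E) : ‖M x‖ = ‖C (K x)‖ := by
  have h_rankOne : (M ∘L rankOne 𝕜 x x) ∘L adjoint M =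
      ((C ∘L K) ∘L rankOne 𝕜 x x) ∘L adjoint (C ∘L K) := by
    rw [h, adjoint_comp]
    simp only [comp_assoc]
  rw [comp_rankOne_comp_adjoint, comp_rankOne_comp_adjoint] at h_rankOne
  replace h_rankOne := congrArg norm h_rankOne
  rw [norm_rankOne, norm_rankOne] at h_rankOne
  exact (mul_self_inj (norm_nonneg _) (norm_nonneg _)).mp h_rankOne

end Hilbert

theorem stmt_10_general {H : Type*} [NormedAddCommGroup H] [InnerProductSpace ℂ H] [CompleteSpace H]
    (M K : H →L[ℂ] H) :
    (((adjoint K).comp K - (adjoint M).comp M).IsPositive ↔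
      ∃ C : H →L[ℂ] H, ‖C‖ ≤ 1 ∧
        ∀ ρ : H →L[ℂ] H,
          (M.comp ρ).comp (adjoint M) =
            C.comp (((K.comp ρ).comp (adjoint K)).comp (adjoint C))) := by
  rw [← le_def, adjoint_comp_self_le_adjoint_comp_self_iff]
  constructor
  · intro h
    obtain ⟨C, hC, rfl⟩ := exists_comp_eq_of_norm_apply_le M K zero_le_one (by simpa using h)
    exact ⟨C, hC, fun ρ => by simp only [adjoint_comp, comp_assoc]⟩
  · rintro ⟨C, hC, h⟩ x
    calc ‖M x‖ = ‖C (K x)‖ := norm_apply_eq_of_forall_conj_eq h x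
      _ ≤ ‖C‖ * ‖K x‖ := le_opNorm C (K x)
      _ ≤ ‖K x‖ := mul_le_of_le_one_left (norm_nonneg _) hC

/-- Let `Λ(ρ) = MρM*` and `Φ(ρ) = KρK*` be pure operations (with `M`, `K`
contractions) defining the effects `A = M*M` and `E = K*K`. Then `A ≤ E` iff there is a pure
operation `Ψ(ρ) = CρC*` (with `C` a contraction) such that `Λ = Ψ ∘ Φ`. -/
theorem stmt_10 {H : Type*} [NormedAddCommGroup H] [InnerProductSpace ℂ H] [CompleteSpace H]
    (M K : H →L[ℂ] H) (hM : ‖M‖ ≤ 1) (hK : ‖K‖ ≤ 1) :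
    (((adjoint K).comp K - (adjoint M).comp M).IsPositive ↔
      ∃ C : H →L[ℂ] H, ‖C‖ ≤ 1 ∧
        ∀ ρ : H →L[ℂ] H,
          (M.comp ρ).comp (adjoint M) =
            C.comp (((K.comp ρ).comp (adjoint K)).comp (adjoint C))) :=
  stmt_10_general M K
end

section
/- Let E = f(A) and F = g(B) where A, B are selfadjoint operators with spectral measures 𝖠, 𝖡 and f, g : ℝ → [0,1] are Borel measurable. If the ranges of the projections 𝖠(supp f) and 𝖡(supp g) intersect only in {0}, then the only effect A₀ with A₀ ≤ E and A₀ ≤ F is A₀ = 0. -/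
/-! If `0 ≤ A₀ ≤ f(A)`, then `re ⟪φ, A₀ φ⟫ ≤ ∫ f dμ_φ ≤ μ_φ(supp f) = re ⟪φ, 𝖠(supp f) φ⟫` because
`0 ≤ f ≤ 1` vanishes off its support, so `0 ≤ A₀ ≤ 𝖠(supp f)`. Below a projection `P`, a positive
operator satisfies `P A₀ = A₀`; hence the range of `A₀` lies in `ran 𝖠(supp f) ∩ ran 𝖡(supp g) = 0`. -/

open ContinuousLinearMap MeasureTheory

theorem integral_le_measureReal_tsupport {α : Type*} [TopologicalSpace α] [MeasurableSpace α]
    [OpensMeasurableSpace α] {m : Measure α} [IsFiniteMeasure m] {h : α → ℝ}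
    (h0 : 0 ≤ h) (h1 : h ≤ 1) : ∫ x, h x ∂m ≤ m.real (tsupport h) := by
  have hS : MeasurableSet (tsupport h) := (isClosed_tsupport h).measurableSet
  calc ∫ x, h x ∂m ≤ ∫ x, (tsupport h).indicator 1 x ∂m := by
        refine integral_mono_of_nonneg (.of_forall h0) ((integrable_const 1).indicator hS)
          (.of_forall fun x => ?_)
        by_cases hx : x ∈ tsupport h
        · simpa [Set.indicator_of_mem hx] using h1 x
        · simp [Set.indicator_of_notMem hx, image_eq_zero_of_notMem_tsupport hx]
    _ = m.real (tsupport h) := integral_indicator_one hS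

namespace ContinuousLinearMap

variable {H : Type*} [NormedAddCommGroup H] [InnerProductSpace ℂ H]

theorem re_inner_le_of_le {S T : H →L[ℂ] H} (hST : S ≤ T) (x : H) :
    (inner ℂ x (S x)).re ≤ (inner ℂ x (T x)).re := by
  simpa [inner_sub_right] using hST.re_inner_nonneg_right x

variable [CompleteSpace H]

theorem le_of_forall_re_inner_le {S T : H →L[ℂ] H} (hS : IsSelfAdjoint S)
    (hT : IsSelfAdjoint T) (h : ∀ x, (inner ℂ x (S x)).re ≤ (inner ℂ x (T x)).re) : S ≤ T := by
  simpa only [le_def, isPositive_def', hT.sub hS, true_and, reApplyInnerSelf_apply, sub_apply,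
    inner_sub_left, hS.isSymmetric.apply_clm, hT.isSymmetric.apply_clm, map_sub, sub_nonneg,
    RCLike.re_to_complex] using h

theorem le_of_le_of_re_inner_eq_integral {α : Type*} [TopologicalSpace α] [MeasurableSpace α]
    [OpensMeasurableSpace α] {T G P : H →L[ℂ] H} {m : H → Measure α}
    [∀ x, IsFiniteMeasure (m x)] {h : α → ℝ} (h0 : 0 ≤ h) (h1 : h ≤ 1)
    (hT : IsSelfAdjoint T) (hP : IsSelfAdjoint P) (hTG : T ≤ G)
    (hGh : ∀ x, (inner ℂ x (G x)).re = ∫ t, h t ∂(m x))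
    (hPm : ∀ x, (m x).real (tsupport h) = (inner ℂ x (P x)).re) : T ≤ P := by
  refine le_of_forall_re_inner_le hT hP fun x => ?_
  calc (inner ℂ x (T x)).re ≤ (inner ℂ x (G x)).re := re_inner_le_of_le hTG x
    _ = ∫ t, h t ∂(m x) := hGh x
    _ ≤ (m x).real (tsupport h) := integral_le_measureReal_tsupport h0 h1
    _ = (inner ℂ x (P x)).re := hPm x

theorem apply_mem_range_of_le_starProjection {T P : H →L[ℂ] H} (hP : IsStarProjection P)
    (hT : T.IsPositive) (hTP : T ≤ P) (x : H) : T x ∈ Set.range P :=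
  ⟨T x, congr($((hP.mul_right_and_mul_left_of_nonneg_of_le
    ((nonneg_iff_isPositive T).mpr hT) hTP).2) x)⟩

end ContinuousLinearMap

theorem stmt_12_general {H : Type*} [NormedAddCommGroup H] [InnerProductSpace ℂ H] [CompleteSpace H]
    (A B : Set ℝ → (H →L[ℂ] H))
    (hAproj : ∀ X, MeasurableSet X → IsSelfAdjoint (A X) ∧ IsIdempotentElem (A X))
    (hBproj : ∀ X, MeasurableSet X → IsSelfAdjoint (B X) ∧ IsIdempotentElem (B X))
    (μ ν : H → Measure ℝ) (hμfin : ∀ φ, IsFiniteMeasure (μ φ)) (hνfin : ∀ φ, IsFiniteMeasure (ν φ))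
    (hμ : ∀ (φ : H) (X : Set ℝ), MeasurableSet X →
      ((μ φ) X).toReal = (inner ℂ φ (A X φ) : ℂ).re)
    (hν : ∀ (φ : H) (X : Set ℝ), MeasurableSet X →
      ((ν φ) X).toReal = (inner ℂ φ (B X φ) : ℂ).re)
    (f g : ℝ → ℝ)
    (hf01 : ∀ x, f x ∈ Set.Icc (0 : ℝ) 1) (hg01 : ∀ x, g x ∈ Set.Icc (0 : ℝ) 1)
    (E F : H →L[ℂ] H)
    (hE : ∀ φ : H, (inner ℂ φ (E φ) : ℂ).re = ∫ x, f x ∂(μ φ))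
    (hF : ∀ φ : H, (inner ℂ φ (F φ) : ℂ).re = ∫ x, g x ∂(ν φ))
    (hdisj : ∀ φ : H, φ ∈ Set.range ⇑(A (tsupport f)) → φ ∈ Set.range ⇑(B (tsupport g)) →
      φ = 0) :
    ∀ A₀ : H →L[ℂ] H, A₀.IsPositive → (1 - A₀).IsPositive →
      (E - A₀).IsPositive → (F - A₀).IsPositive → A₀ = 0 := by
  intro A₀ hA₀ _ hEA hFA
  have hSf : MeasurableSet (tsupport f) := (isClosed_tsupport f).measurableSet
  have hSg : MeasurableSet (tsupport g) := (isClosed_tsupport g).measurableSet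
  have hA₀f : A₀ ≤ A (tsupport f) :=
    le_of_le_of_re_inner_eq_integral (fun x => (hf01 x).1) (fun x => (hf01 x).2)
      hA₀.isSelfAdjoint (hAproj _ hSf).1 hEA hE fun φ => hμ φ _ hSf
  have hA₀g : A₀ ≤ B (tsupport g) :=
    le_of_le_of_re_inner_eq_integral (fun x => (hg01 x).1) (fun x => (hg01 x).2)
      hA₀.isSelfAdjoint (hBproj _ hSg).1 hFA hF fun φ => hν φ _ hSg
  ext ψ
  exact hdisj _
    (apply_mem_range_of_le_starProjection ⟨(hAproj _ hSf).2, (hAproj _ hSf).1⟩ hA₀ hA₀f ψ)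
    (apply_mem_range_of_le_starProjection ⟨(hBproj _ hSg).2, (hBproj _ hSg).1⟩ hA₀ hA₀g ψ)

/-- Let `E = f(A)` and `F = g(B)` for spectral measures `𝖠, 𝖡` (encoded by
their projection values and associated scalar measures) and Borel `f, g : ℝ → [0,1]`. If
`ran 𝖠(supp f) ∩ ran 𝖡(supp g) = {0}`, then the only effect below both `E` and `F` is `0`. -/
theorem stmt_12 {H : Type*} [NormedAddCommGroup H] [InnerProductSpace ℂ H] [CompleteSpace H]
    (A B : Set ℝ → (H →L[ℂ] H))
    (hAproj : ∀ X, MeasurableSet X → IsSelfAdjoint (A X) ∧ IsIdempotentElem (A X))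
    (hBproj : ∀ X, MeasurableSet X → IsSelfAdjoint (B X) ∧ IsIdempotentElem (B X))
    (hAempty : A ∅ = 0) (hAuniv : A Set.univ = 1)
    (hBempty : B ∅ = 0) (hBuniv : B Set.univ = 1)
    (hAmul : ∀ X Y, MeasurableSet X → MeasurableSet Y → A (X ∩ Y) = (A X).comp (A Y))
    (hBmul : ∀ X Y, MeasurableSet X → MeasurableSet Y → B (X ∩ Y) = (B X).comp (B Y))
    (μ ν : H → Measure ℝ) (hμfin : ∀ φ, IsFiniteMeasure (μ φ)) (hνfin : ∀ φ, IsFiniteMeasure (ν φ))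
    (hμ : ∀ (φ : H) (X : Set ℝ), MeasurableSet X →
      ((μ φ) X).toReal = (inner ℂ φ (A X φ) : ℂ).re)
    (hν : ∀ (φ : H) (X : Set ℝ), MeasurableSet X →
      ((ν φ) X).toReal = (inner ℂ φ (B X φ) : ℂ).re)
    (f g : ℝ → ℝ) (hf : Measurable f) (hg : Measurable g)
    (hf01 : ∀ x, f x ∈ Set.Icc (0 : ℝ) 1) (hg01 : ∀ x, g x ∈ Set.Icc (0 : ℝ) 1)
    (E F : H →L[ℂ] H) (hEsa : IsSelfAdjoint E) (hFsa : IsSelfAdjoint F)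
    (hE : ∀ φ : H, (inner ℂ φ (E φ) : ℂ).re = ∫ x, f x ∂(μ φ))
    (hF : ∀ φ : H, (inner ℂ φ (F φ) : ℂ).re = ∫ x, g x ∂(ν φ))
    (hdisj : ∀ φ : H, φ ∈ Set.range ⇑(A (tsupport f)) → φ ∈ Set.range ⇑(B (tsupport g)) →
      φ = 0) :
    ∀ A₀ : H →L[ℂ] H, A₀.IsPositive → (1 - A₀).IsPositive →
      (E - A₀).IsPositive → (F - A₀).IsPositive → A₀ = 0 :=
  stmt_12_general A B hAproj hBproj μ ν hμfin hνfin hμ hν f g hf01 hg01 E F hE hF hdisj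
end

section
/- Let Q and A be binary observables with outcomes {0,1}, given by effects Q(1), A(1) with A(1) ≠ 0. Then the following are equivalent: (i) A(1) ≤ Q(1); (ii) the pairs {Q(1),I−Q(1)} and {A(1),I−A(1)} admit a joint observable G : {0,1}×{0,1} → effects (four effects summing to I with correct margins) such that tr[G(1,1)ρ] = tr[A(1)ρ] for every state ρ (i.e., outcome 1 of A guarantees outcome 1 of Q). -/
open ContinuousLinearMap

/-!
If `A(1) ≤ Q(1)`, the effects `1 - Q(1)`, `0`, `Q(1) - A(1)`, `A(1)` form a joint observable with
`G(1,1) = A(1)`. Conversely, on a complex inner product space an operator is determined by its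
quadratic form, so `⟪ψ, G(1,1) ψ⟫ = ⟪ψ, A(1) ψ⟫` for all `ψ` forces `G(1,1) = A(1)`, and then
`Q(1) - A(1) = G(1,0)` is positive.
-/

namespace ContinuousLinearMap

variable {H : Type*} [NormedAddCommGroup H] [InnerProductSpace ℂ H]

theorem ext_inner_self_map {S T : H →L[ℂ] H}
    (h : ∀ x : H, (inner ℂ x (S x) : ℂ) = inner ℂ x (T x)) : S = T := by
  have hlin : (S : H →ₗ[ℂ] H) = T :=
    (_root_.ext_inner_map _ _).mp fun x => by
      simp only [coe_coe]
      rw [← inner_conj_symm, h, inner_conj_symm]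
  exact coe_injective hlin

theorem IsPositive.one_sub_sub {Q A : H →L[ℂ] H} (hQ : (1 - Q).IsPositive) (hA : A.IsPositive) :
    (1 - (Q - A)).IsPositive := by
  rw [show (1 : H →L[ℂ] H) - (Q - A) = (1 - Q) + A by abel]
  exact hQ.add hA

end ContinuousLinearMap

section JointObservable

variable {H : Type*} [NormedAddCommGroup H] [InnerProductSpace ℂ H]

def jointOfLE (Q A : H →L[ℂ] H) : Bool → Bool → H →L[ℂ] H
  | false, false => 1 - Q
  | false, true => 0
  | true, false => Q - A
  | true, true => A

variable (Q A : H →L[ℂ] H)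

theorem jointOfLE_isEffect (hQ : Q.IsPositive) (hQ1 : (1 - Q).IsPositive)
    (hA : A.IsPositive) (hA1 : (1 - A).IsPositive) (hQA : (Q - A).IsPositive) (i j : Bool) :
    (jointOfLE Q A i j).IsPositive ∧ (1 - jointOfLE Q A i j).IsPositive := by
  cases i <;> cases j
  · exact ⟨hQ1, by rwa [jointOfLE, sub_sub_cancel]⟩
  · exact ⟨isPositive_zero, by rw [jointOfLE, sub_zero]; exact isPositive_one⟩
  · exact ⟨hQA, hQ1.one_sub_sub hA⟩
  · exact ⟨hA, hA1⟩

theorem jointOfLE_sum :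
    jointOfLE Q A false false + jointOfLE Q A false true + jointOfLE Q A true false +
      jointOfLE Q A true true = 1 := by
  simp only [jointOfLE]
  abel

theorem jointOfLE_marginal_fst : jointOfLE Q A true false + jointOfLE Q A true true = Q := by
  simp [jointOfLE]

theorem jointOfLE_marginal_snd : jointOfLE Q A false true + jointOfLE Q A true true = A := by
  simp [jointOfLE]

end JointObservable

theorem stmt_13_general {H : Type*} [NormedAddCommGroup H] [InnerProductSpace ℂ H]
    (Q1 A1 : H →L[ℂ] H)
    (hQ : Q1.IsPositive) (hQ1 : (1 - Q1).IsPositive)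
    (hA : A1.IsPositive) (hA1 : (1 - A1).IsPositive) :
    (Q1 - A1).IsPositive ↔
      ∃ G : Bool → Bool → (H →L[ℂ] H),
        (∀ i j, (G i j).IsPositive ∧ (1 - G i j).IsPositive) ∧
        G false false + G false true + G true false + G true true = 1 ∧
        G true false + G true true = Q1 ∧
        G false true + G true true = A1 ∧
        ∀ ψ : H, (inner ℂ ψ (G true true ψ) : ℂ) = inner ℂ ψ (A1 ψ) := by
  constructor
  · intro hQA
    exact ⟨jointOfLE Q1 A1, jointOfLE_isEffect Q1 A1 hQ hQ1 hA hA1 hQA, jointOfLE_sum Q1 A1,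
      jointOfLE_marginal_fst Q1 A1, jointOfLE_marginal_snd Q1 A1, fun _ => rfl⟩
  · rintro ⟨G, hG, -, hQm, -, hG11⟩
    have hG11_eq : G true true = A1 := ext_inner_self_map hG11
    have hdiff : Q1 - A1 = G true false := by rw [← hQm, hG11_eq, add_sub_cancel_right]
    exact hdiff ▸ (hG true false).1

/-- For binary observables given by effects `Q1` (for `Q`) and `A1 ≠ 0`
(for `A`), the following are equivalent: (i) `A1 ≤ Q1`; (ii) there is a joint observable
`G : {0,1}×{0,1} → effects` of the two binary observables such that the outcome `1` of `A`
guarantees the outcome `1` of `Q`, i.e. `tr[G(1,1)ρ] = tr[A1 ρ]` in every (pure) state. -/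
theorem stmt_13 {H : Type*} [NormedAddCommGroup H] [InnerProductSpace ℂ H] [CompleteSpace H]
    (Q1 A1 : H →L[ℂ] H)
    (hQ : Q1.IsPositive) (hQ1 : (1 - Q1).IsPositive)
    (hA : A1.IsPositive) (hA1 : (1 - A1).IsPositive) (hA0 : A1 ≠ 0) :
    (Q1 - A1).IsPositive ↔
      ∃ G : Bool → Bool → (H →L[ℂ] H),
        (∀ i j, (G i j).IsPositive ∧ (1 - G i j).IsPositive) ∧
        G false false + G false true + G true false + G true true = 1 ∧
        G true false + G true true = Q1 ∧
        G false true + G true true = A1 ∧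
        ∀ ψ : H, (inner ℂ ψ (G true true ψ) : ℂ) = inner ℂ ψ (A1 ψ) :=
  stmt_13_general Q1 A1 hQ hQ1 hA hA1
end

section
/- Let φ ∈ L²(ℝ) be such that its Fourier transform is supported in [−R, R] for some R > 0, and suppose φ(nπ/R) = 0 for every integer n (φ is continuous as the inverse Fourier transform of an L¹ function). Then φ = 0. -/
/-!
Up to the factor `2R`, the sample `φ(-nπ/R)` is the `n`-th Fourier coefficient of `g` on the
period interval `[-R, R]`. So all Fourier coefficients of `g` vanish, Parseval's identity gives
`∫_{-R}^{R} ‖g‖² = 0`, hence `g = 0` almost everywhere and `φ`, its inverse Fourier transform,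
vanishes identically.
-/

open MeasureTheory Set

theorem fourierCoeffOn_eq_integral_of_forall_compl_eq_zero {E : Type*} [NormedAddCommGroup E]
    [NormedSpace ℂ E] {a b : ℝ} (hab : a < b) {f : ℝ → E} (hf : ∀ x ∉ Icc a b, f x = 0) (n : ℤ) :
    fourierCoeffOn hab f n =
      (1 / (b - a)) • ∫ x : ℝ, Complex.exp (-(2 * Real.pi * Complex.I * n * x / (b - a))) • f x := by
  rw [fourierCoeffOn_eq_integral, intervalIntegral.integral_of_le hab.le,
    ← integral_Icc_eq_integral_Ioc, setIntegral_eq_integral_of_forall_compl_eq_zero]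
  · simp only [fourier_coe_apply, Int.cast_neg, Complex.ofReal_sub]
    congr 3 with x
    ring_nf
  · intro x hx
    rw [hf x hx, smul_zero]

theorem ae_restrict_Ioc_eq_zero_of_fourierCoeffOn_eq_zero {a b : ℝ} (hab : a < b) {f : ℝ → ℂ}
    (hL2 : MemLp f 2 (volume.restrict (Ioc a b))) (hf : ∀ n, fourierCoeffOn hab f n = 0) :
    f =ᵐ[volume.restrict (Ioc a b)] 0 := by
  have hnorm : ∫ x in Ioc a b, ‖f x‖ ^ 2 = 0 := by
    have hparseval := hasSum_sq_fourierCoeffOn hab hL2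
    simp only [hf, norm_zero, ne_eq, OfNat.ofNat_ne_zero, not_false_eq_true, zero_pow]
      at hparseval
    have h := hparseval.unique hasSum_zero
    rw [intervalIntegral.integral_of_le hab.le] at h
    simpa [sub_ne_zero.mpr hab.ne'] using h.symm
  have hint : Integrable (fun x => ‖f x‖ ^ 2) (volume.restrict (Ioc a b)) :=
    (memLp_two_iff_integrable_sq_norm hL2.1).mp hL2
  rw [setIntegral_eq_zero_iff_of_nonneg_ae (ae_of_all _ fun x => by positivity) hint] at hnorm
  filter_upwards [hnorm] with x hx
  simpa using hx

theorem ae_eq_zero_of_forall_compl_eq_zero_of_ae_restrict_Ioc {E : Type*} [Zero E] {a b : ℝ}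
    {f : ℝ → E} (hf : ∀ x ∉ Icc a b, f x = 0) (h : f =ᵐ[volume.restrict (Ioc a b)] 0) :
    f =ᵐ[volume] 0 := by
  refine ae_of_ae_restrict_of_ae_restrict_compl (Icc a b) ?_ ?_
  · exact (ae_restrict_congr_set Ioc_ae_eq_Icc).mp h
  · exact (ae_restrict_iff' measurableSet_Icc.compl).mpr (ae_of_all _ hf)

theorem stmt_19_general (R : ℝ) (hR : 0 < R) (g : ℝ → ℂ)
    (hgsupp : ∀ p : ℝ, p ∉ Set.Icc (-R) R → g p = 0)
    (hgL2 : MemLp g 2 (volume : Measure ℝ))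
    (φ : ℝ → ℂ)
    (hφ : ∀ x : ℝ, φ x = ∫ p : ℝ, g p * Complex.exp (Complex.I * (x : ℂ) * (p : ℂ)))
    (hsamples : ∀ n : ℤ, φ ((n : ℝ) * Real.pi / R) = 0) :
    ∀ x : ℝ, φ x = 0 := by
  have hR' : -R < R := by linarith
  have hcoeff (n : ℤ) : fourierCoeffOn hR' g n = 0 := by
    rw [fourierCoeffOn_eq_integral_of_forall_compl_eq_zero hR' hgsupp, smul_eq_zero]
    refine .inr (.trans ?_ ((hφ _).symm.trans (hsamples (-n))))
    congr 1 with p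
    rw [smul_eq_mul, mul_comm]
    congr 2
    push_cast
    field_simp
    ring
  have hg : g =ᵐ[volume] 0 := ae_eq_zero_of_forall_compl_eq_zero_of_ae_restrict_Ioc hgsupp
    (ae_restrict_Ioc_eq_zero_of_fourierCoeffOn_eq_zero hR' (hgL2.restrict _) hcoeff)
  intro x
  rw [hφ x]
  exact integral_eq_zero_of_ae (by filter_upwards [hg] with p hp; simp [hp])

/-- uniqueness in the Shannon sampling theorem. Let `φ ∈ L²(ℝ)` be
band-limited: `φ` is the inverse Fourier transform of a (square-)integrable function `g`
supported in `[-R, R]`. If `φ(nπ/R) = 0` for every integer `n`, then `φ = 0`. -/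
theorem stmt_19 (R : ℝ) (hR : 0 < R) (g : ℝ → ℂ)
    (hgsupp : ∀ p : ℝ, p ∉ Set.Icc (-R) R → g p = 0)
    (hgint : Integrable g (volume : Measure ℝ))
    (hgL2 : MemLp g 2 (volume : Measure ℝ))
    (φ : ℝ → ℂ)
    (hφ : ∀ x : ℝ, φ x = ∫ p : ℝ, g p * Complex.exp (Complex.I * (x : ℂ) * (p : ℂ)))
    (hsamples : ∀ n : ℤ, φ ((n : ℝ) * Real.pi / R) = 0) :
    ∀ x : ℝ, φ x = 0 :=
  stmt_19_general R hR g hgsupp hgL2 φ hφ hsamples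
end
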